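/- arXiv:2311.14894 — 4 statements merged into one kernel-verified Lean document; each statement's English description precedes it below -/
import Mathlib

section
/- Let X, Z be independent random vectors and g integrable with values in ℝⁿ; let G_fo := E_Z[g(X,Z)] − E[g] and G_tot := g(X,Z) − E_X[g(X,Z)] be the first-order and total ANOVA functionals, with independent copies G_fo', G_tot'. If k : ℝⁿ × ℝⁿ → ℝ is a convex-in-first-argument positive definite kernel with the needed integrability, then E[k(G_fo, G_fo')] ≤ E[k(G_tot, G_tot')]. -/
open MeasureTheory ProbabilityTheory

/-- Every convex continuous function on a real normed space has a global affine minorant. -/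
lemma exists_affine_minorant {E : Type*} [NormedAddCommGroup E] [NormedSpace ℝ E]
    (f : E → ℝ) (hf : ConvexOn ℝ Set.univ f) (hc : Continuous f) :
    ∃ (l : E →L[ℝ] ℝ) (a : ℝ), ∀ v, a + l v ≤ f v := by
  have hS : Convex ℝ {p : E × ℝ | f p.1 ≤ p.2} := by
    have h := hf.convex_epigraph
    simpa using h
  have hSc : IsClosed {p : E × ℝ | f p.1 ≤ p.2} :=
    isClosed_le (hc.comp continuous_fst) continuous_snd
  have hx : ((0 : E), f 0 - 1) ∉ {p : E × ℝ | f p.1 ≤ p.2} := by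
    simp
  obtain ⟨L, u, hLx, hLS⟩ := geometric_hahn_banach_point_closed hS hSc hx
  set l : E →L[ℝ] ℝ := L.comp (ContinuousLinearMap.inl ℝ E ℝ) with hl
  set c : ℝ := L (0, 1) with hcdef
  have hdec : ∀ v t, L (v, t) = l v + t * c := by
    intro v t
    have h1 : (v, t) = ((v, (0:ℝ)) + t • ((0:E), (1:ℝ))) := by
      simp [Prod.ext_iff]
    rw [h1, map_add, L.map_smul]
    simp only [hl, ContinuousLinearMap.comp_apply, ContinuousLinearMap.inl_apply, smul_eq_mul,
      hcdef]
  have hc0 : 0 < c := by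
    have h1 : L ((0:E), f 0 - 1) < u := hLx
    have h2 : u < L ((0:E), f 0) := hLS _ (by simp)
    rw [hdec] at h1 h2
    nlinarith
  refine ⟨(-c⁻¹) • l, u / c, fun v => ?_⟩
  have h3 : u < L (v, f v) := hLS _ (by simp)
  rw [hdec] at h3
  have : (u - l v) / c ≤ f v := by
    rw [div_le_iff₀ hc0]; nlinarith
  have hexp : u / c + ((-c⁻¹) • l) v = (u - l v) / c := by
    simp [ContinuousLinearMap.smul_apply, smul_eq_mul]
    field_simp
    ring
  linarith [hexp ▸ this]


lemma jensen_aux {E : Type*} [NormedAddCommGroup E] [NormedSpace ℝ E] [FiniteDimensional ℝ E]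
    {α : Type*} [MeasurableSpace α] (μ : Measure α) [IsProbabilityMeasure μ]
    (φ : E → ℝ) (hφ : ConvexOn ℝ Set.univ φ) {f : α → E} (hf : Integrable f μ)
    (hφf : Integrable (fun a => φ (f a)) μ) :
    φ (∫ a, f a ∂μ) ≤ ∫ a, φ (f a) ∂μ :=
  hφ.map_integral_le (hφ.continuousOn isOpen_univ) isClosed_univ
    (Filter.Eventually.of_forall fun _ => Set.mem_univ _) hf hφf

lemma condexp_indep_aux {Ω A B : Type*} [MeasurableSpace Ω] [MeasurableSpace A]
    [MeasurableSpace B] (μ : Measure Ω) [IsProbabilityMeasure μ]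
    {E : Type*} [NormedAddCommGroup E] [NormedSpace ℝ E] [CompleteSpace E]
    [MeasurableSpace E] [BorelSpace E] [SecondCountableTopology E]
    (X : Ω → A) (Z : Ω → B) (hX : Measurable X) (hZ : Measurable Z)
    (hXZ : IndepFun X Z μ) (g : A × B → E) (hg : Measurable g)
    (hint : Integrable (fun ω => g (X ω, Z ω)) μ) :
    μ[fun ω => g (X ω, Z ω)|MeasurableSpace.comap X inferInstance] =ᵐ[μ]
      fun ω => ∫ z, g (X ω, z) ∂(μ.map Z) := by
  haveI : IsProbabilityMeasure (μ.map X) := Measure.isProbabilityMeasure_map hX.aemeasurable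
  haveI : IsProbabilityMeasure (μ.map Z) := Measure.isProbabilityMeasure_map hZ.aemeasurable
  have hlaw : μ.map (fun ω => (X ω, Z ω)) = (μ.map X).prod (μ.map Z) :=
    (indepFun_iff_map_prod_eq_prod_map_map hX.aemeasurable hZ.aemeasurable).mp hXZ
  have hgsm : StronglyMeasurable g := hg.stronglyMeasurable
  have hgi : Integrable g ((μ.map X).prod (μ.map Z)) := by
    rw [← hlaw]
    exact (integrable_map_measure hgsm.aestronglyMeasurable
      (hX.prodMk hZ).aemeasurable).mpr hint
  set φ0 : A → E := fun x => ∫ z, g (x, z) ∂(μ.map Z) with hφ0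
  have hφ0sm : StronglyMeasurable φ0 := hgsm.integral_prod_right'
  have hm : MeasurableSpace.comap X inferInstance ≤ _ := hX.comap_le
  have hφ0ν : Integrable φ0 (μ.map X) := hgi.integral_prod_left
  have hφ0int : Integrable (fun ω => φ0 (X ω)) μ :=
    (integrable_map_measure hφ0sm.aestronglyMeasurable hX.aemeasurable).mp hφ0ν
  refine (ae_eq_condExp_of_forall_setIntegral_eq hm hint
    (fun s _ _ => hφ0int.integrableOn) ?_ ?_).symm
  · rintro s ⟨t, ht, rfl⟩ -
    have h1 : ∫ ω in X ⁻¹' t, φ0 (X ω) ∂μ = ∫ x in t, φ0 x ∂(μ.map X) :=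
      (setIntegral_map ht hφ0sm.aestronglyMeasurable hX.aemeasurable).symm
    have hpre : X ⁻¹' t = (fun ω => (X ω, Z ω)) ⁻¹' (t ×ˢ Set.univ) := by
      ext ω; simp
    have h2 : ∫ ω in X ⁻¹' t, g (X ω, Z ω) ∂μ
        = ∫ p in t ×ˢ Set.univ, g p ∂((μ.map X).prod (μ.map Z)) := by
      rw [hpre, ← hlaw, setIntegral_map (ht.prod MeasurableSet.univ)
        hgsm.aestronglyMeasurable (hX.prodMk hZ).aemeasurable]
    have h3 : ∫ p in t ×ˢ Set.univ, g p ∂((μ.map X).prod (μ.map Z))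
        = ∫ x in t, φ0 x ∂(μ.map X) := by
      rw [setIntegral_prod _ hgi.integrableOn]
      simp [hφ0]
    rw [h1, h2, h3]
  · exact StronglyMeasurable.aestronglyMeasurable
      (hφ0sm.comp_measurable (measurable_iff_comap_le.mpr le_rfl))

lemma key_ineq {A B : Type*} [MeasurableSpace A] [MeasurableSpace B]
    {E : Type*} [NormedAddCommGroup E] [NormedSpace ℝ E] [FiniteDimensional ℝ E]
    [MeasurableSpace E] [BorelSpace E]
    (ν : Measure A) (ρ : Measure B) [IsProbabilityMeasure ν] [IsProbabilityMeasure ρ]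
    (Ψ : A × B → E) (hΨ : Measurable Ψ) (hΨi : Integrable Ψ (ν.prod ρ))
    (Φ : A → E) (hΦm : Measurable Φ) (hΦ : ∀ᵐ x ∂ν, Φ x = ∫ z, Ψ (x, z) ∂ρ)
    (k : E → E → ℝ) (hsym : ∀ r r', k r r' = k r' r)
    (hconv : ∀ r', ConvexOn ℝ Set.univ fun r => k r r')
    (hmeas : Measurable (Function.uncurry k))
    (hI1 : Integrable (fun p : A × A => k (Φ p.1) (Φ p.2)) (ν.prod ν))
    (hI2 : Integrable (fun p : (A × B) × (A × B) => k (Ψ p.1) (Ψ p.2))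
      ((ν.prod ρ).prod (ν.prod ρ))) :
    ∫ p, k (Φ p.1) (Φ p.2) ∂(ν.prod ν)
      ≤ ∫ p, k (Ψ p.1) (Ψ p.2) ∂((ν.prod ρ).prod (ν.prod ρ)) := by
  -- convexity in the second argument
  have hconv2 : ∀ u, ConvexOn ℝ Set.univ fun v => k u v := by
    intro u
    have h : (fun v => k u v) = fun v => k v u := funext fun v => hsym u v
    rw [h]; exact hconv u
  have hcont : ∀ u, Continuous fun r => k r u := fun u =>
    continuousOn_univ.mp ((hconv u).continuousOn isOpen_univ)
  -- the rearranging map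
  set f₀ : (A × B) × (A × B) → (A × A) × (B × B) :=
    fun p => ((p.1.1, p.2.1), (p.1.2, p.2.2)) with hf₀def
  have hf₀m : Measurable f₀ :=
    ((measurable_fst.comp measurable_fst).prodMk (measurable_fst.comp measurable_snd)).prodMk
      ((measurable_snd.comp measurable_fst).prodMk (measurable_snd.comp measurable_snd))
  have hmp : Measure.map f₀ ((ν.prod ρ).prod (ν.prod ρ)) = (ν.prod ν).prod (ρ.prod ρ) := by
    have s1 : MeasurePreserving (MeasurableEquiv.prodAssoc.symm :
          (A × B) × (A × B) → ((A × B) × A) × B)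
        ((ν.prod ρ).prod (ν.prod ρ)) (((ν.prod ρ).prod ν).prod ρ) :=
      (measurePreserving_prodAssoc (ν.prod ρ) ν ρ).symm _
    have w1 : MeasurePreserving (MeasurableEquiv.prodAssoc : ((A × B) × A) → A × (B × A))
        ((ν.prod ρ).prod ν) (ν.prod (ρ.prod ν)) := measurePreserving_prodAssoc ν ρ ν
    have w2 : MeasurePreserving (Prod.map (id : A → A) (Prod.swap : B × A → A × B))
        (ν.prod (ρ.prod ν)) (ν.prod (ν.prod ρ)) :=
      (MeasurePreserving.id ν).prod Measure.measurePreserving_swap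
    have w3 : MeasurePreserving (MeasurableEquiv.prodAssoc.symm : A × (A × B) → (A × A) × B)
        (ν.prod (ν.prod ρ)) ((ν.prod ν).prod ρ) :=
      (measurePreserving_prodAssoc ν ν ρ).symm _
    set w0 : ((A × B) × A) → (A × A) × B :=
      (MeasurableEquiv.prodAssoc.symm : A × (A × B) → (A × A) × B) ∘
        (Prod.map (id : A → A) (Prod.swap : B × A → A × B)) ∘
        (MeasurableEquiv.prodAssoc : ((A × B) × A) → A × (B × A)) with hw0
    have w : MeasurePreserving w0
        ((ν.prod ρ).prod ν) ((ν.prod ν).prod ρ) := w3.comp (w2.comp w1)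
    have s2 : MeasurePreserving (Prod.map w0 (id : B → B))
        (((ν.prod ρ).prod ν).prod ρ) (((ν.prod ν).prod ρ).prod ρ) :=
      w.prod (MeasurePreserving.id ρ)
    have s3 : MeasurePreserving (MeasurableEquiv.prodAssoc :
          ((A × A) × B) × B → (A × A) × (B × B))
        (((ν.prod ν).prod ρ).prod ρ) ((ν.prod ν).prod (ρ.prod ρ)) :=
      measurePreserving_prodAssoc (ν.prod ν) ρ ρ
    have hcomp := (s3.comp (s2.comp s1)).map_eq
    have heq : ((MeasurableEquiv.prodAssoc :
          ((A × A) × B) × B → (A × A) × (B × B)) ∘ (Prod.map w0 (id : B → B)) ∘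
          (MeasurableEquiv.prodAssoc.symm : (A × B) × (A × B) → ((A × B) × A) × B)) = f₀ := by
      funext p
      obtain ⟨⟨x, z⟩, ⟨x', z'⟩⟩ := p
      rfl
    rwa [heq] at hcomp
  set F' : (A × A) × (B × B) → ℝ :=
    fun q => k (Ψ (q.1.1, q.2.1)) (Ψ (q.1.2, q.2.2)) with hF'def
  have hF'm : Measurable F' := by
    have : F' = Function.uncurry k ∘ fun q : (A × A) × (B × B) =>
        (Ψ (q.1.1, q.2.1), Ψ (q.1.2, q.2.2)) := rfl
    rw [this]
    exact hmeas.comp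
      ((hΨ.comp ((measurable_fst.comp measurable_fst).prodMk
          (measurable_fst.comp measurable_snd))).prodMk
        (hΨ.comp ((measurable_snd.comp measurable_fst).prodMk
          (measurable_snd.comp measurable_snd))))
  have hcompF : (fun p => F' (f₀ p)) = fun p : (A × B) × (A × B) => k (Ψ p.1) (Ψ p.2) := rfl
  have hI2' : Integrable F' ((ν.prod ν).prod (ρ.prod ρ)) := by
    rw [← hmp]
    exact (integrable_map_measure hF'm.aestronglyMeasurable hf₀m.aemeasurable).mpr hI2
  have hRHS : ∫ p, k (Ψ p.1) (Ψ p.2) ∂((ν.prod ρ).prod (ν.prod ρ))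
      = ∫ q, F' q ∂((ν.prod ν).prod (ρ.prod ρ)) := by
    rw [← hmp, integral_map hf₀m.aemeasurable hF'm.aestronglyMeasurable, hcompF]
  rw [hRHS, integral_prod _ hI2']
  refine integral_mono_ae hI1 hI2'.integral_prod_left ?_
  -- lift a.e. facts to the product
  have hgood : ∀ᵐ x ∂ν, (Φ x = ∫ z, Ψ (x, z) ∂ρ) ∧ Integrable (fun z => Ψ (x, z)) ρ :=
    hΦ.and hΨi.prod_right_ae
  have hfst : ∀ᵐ p ∂ν.prod ν,
      (Φ p.1 = ∫ z, Ψ (p.1, z) ∂ρ) ∧ Integrable (fun z => Ψ (p.1, z)) ρ := by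
    refine ae_of_ae_map (p := fun x : A => (Φ x = ∫ z, Ψ (x, z) ∂ρ)
      ∧ Integrable (fun z => Ψ (x, z)) ρ) measurable_fst.aemeasurable ?_
    rw [Measure.map_fst_prod]
    simpa [measure_univ] using hgood
  have hsnd : ∀ᵐ p ∂ν.prod ν,
      (Φ p.2 = ∫ z, Ψ (p.2, z) ∂ρ) ∧ Integrable (fun z => Ψ (p.2, z)) ρ := by
    refine ae_of_ae_map (p := fun x : A => (Φ x = ∫ z, Ψ (x, z) ∂ρ)
      ∧ Integrable (fun z => Ψ (x, z)) ρ) measurable_snd.aemeasurable ?_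
    rw [Measure.map_snd_prod]
    simpa [measure_univ] using hgood
  filter_upwards [hfst, hsnd, hI2'.prod_right_ae] with p hp1 hp2 hp3
  obtain ⟨he1, hf1⟩ := hp1
  obtain ⟨he2, hf2⟩ := hp2
  -- notation for the slices
  set u1 : B → E := fun z => Ψ (p.1, z) with hu1
  set u2 : B → E := fun z => Ψ (p.2, z) with hu2
  have hu1m : Measurable u1 := hΨ.comp (measurable_const.prodMk measurable_id)
  have hK : Integrable (fun zz' : B × B => k (u1 zz'.1) (u2 zz'.2)) (ρ.prod ρ) := hp3
  set H : B → ℝ := fun z => ∫ z', k (u1 z) (u2 z') ∂ρ with hH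
  have hHint : Integrable H ρ := hK.integral_prod_left
  -- Step A : inner Jensen in the second argument
  have stepA : ∀ᵐ z ∂ρ, k (u1 z) (Φ p.2) ≤ H z := by
    filter_upwards [hK.prod_right_ae] with z hz
    rw [he2]
    exact jensen_aux ρ _ (hconv2 (u1 z)) hf2 hz
  -- integrability of the middle function via an affine minorant
  obtain ⟨l, a, hla⟩ := exists_affine_minorant (fun r => k r (Φ p.2)) (hconv _) (hcont _)
  have hlint : Integrable (fun z => a + l (u1 z)) ρ :=
    (integrable_const a).add (l.integrable_comp hf1)
  have hhm : AEStronglyMeasurable (fun z => k (u1 z) (Φ p.2)) ρ := by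
    have : (fun z => k (u1 z) (Φ p.2))
        = Function.uncurry k ∘ fun z => (u1 z, Φ p.2) := rfl
    rw [this]
    exact (hmeas.comp (hu1m.prodMk measurable_const)).aestronglyMeasurable
  have hhi : Integrable (fun z => k (u1 z) (Φ p.2)) ρ := by
    refine Integrable.mono' (hHint.abs.add hlint.abs) hhm ?_
    filter_upwards [stepA] with z hz
    have h1 := hla (u1 z)
    have h2 := le_abs_self (H z)
    have h3 := neg_abs_le (a + l (u1 z))
    simp only [Pi.add_apply, Real.norm_eq_abs]
    rw [abs_le]
    constructor
    · linarith [abs_nonneg (H z)]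
    · linarith [abs_nonneg (a + l (u1 z))]
  -- Step C : outer Jensen in the first argument
  have stepC : k (Φ p.1) (Φ p.2) ≤ ∫ z, k (u1 z) (Φ p.2) ∂ρ := by
    rw [he1]
    exact jensen_aux ρ _ (hconv (Φ p.2)) hf1 hhi
  have stepD : ∫ z, k (u1 z) (Φ p.2) ∂ρ ≤ ∫ z, H z ∂ρ :=
    integral_mono_ae hhi hHint stepA
  have hfin : ∫ z, H z ∂ρ = ∫ q, F' (p, q) ∂ρ.prod ρ := (integral_prod _ hK).symm
  calc k (Φ p.1) (Φ p.2) ≤ ∫ z, k (u1 z) (Φ p.2) ∂ρ := stepC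
    _ ≤ ∫ z, H z ∂ρ := stepD
    _ = ∫ q, F' (p, q) ∂ρ.prod ρ := hfin


/-- for a symmetric positive-definite kernel `k` that is convex in its
first argument (hence in each argument), the expected kernel value on i.i.d. copies of
the first-order ANOVA functional is bounded by that of the total ANOVA functional:
`E[k(G_fo, G_fo')] ≤ E[k(G_tot, G_tot')]`. -/
theorem kernel_firstOrder_le_total
    {Ω A B : Type*} [MeasurableSpace Ω] [MeasurableSpace A] [MeasurableSpace B]
    (μ : Measure Ω) [IsProbabilityMeasure μ] {n : ℕ}
    (X X' : Ω → A) (Z Z' : Ω → B)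
    (hX : Measurable X) (hZ : Measurable Z) (hX' : Measurable X') (hZ' : Measurable Z')
    (hXZ : IndepFun X Z μ) (hXZ' : IndepFun X' Z' μ)
    (hcopy : IdentDistrib (fun ω => (X ω, Z ω)) (fun ω => (X' ω, Z' ω)) μ μ)
    (hpair : IndepFun (fun ω => (X ω, Z ω)) (fun ω => (X' ω, Z' ω)) μ)
    (g : A × B → EuclideanSpace ℝ (Fin n)) (hg : Measurable g)
    (hint : Integrable (fun ω => g (X ω, Z ω)) μ)
    (k : EuclideanSpace ℝ (Fin n) → EuclideanSpace ℝ (Fin n) → ℝ)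
    (hsym : ∀ r r', k r r' = k r' r)
    (hposdef : ∀ (m : ℕ) (x : Fin m → EuclideanSpace ℝ (Fin n)) (c : Fin m → ℝ),
      0 ≤ ∑ i, ∑ j, c i * c j * k (x i) (x j))
    (hconv : ∀ r', ConvexOn ℝ Set.univ (fun r => k r r'))
    (hmeas : Measurable (Function.uncurry k)) :
    let m := ∫ ω, g (X ω, Z ω) ∂μ
    let Gfo := fun ω =>
      (μ[fun ω => g (X ω, Z ω)|MeasurableSpace.comap X inferInstance]) ω - m
    let Gfo' := fun ω =>
      (μ[fun ω => g (X' ω, Z' ω)|MeasurableSpace.comap X' inferInstance]) ω - m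
    let Gtot := fun ω =>
      g (X ω, Z ω) - (μ[fun ω => g (X ω, Z ω)|MeasurableSpace.comap Z inferInstance]) ω
    let Gtot' := fun ω =>
      g (X' ω, Z' ω) - (μ[fun ω => g (X' ω, Z' ω)|MeasurableSpace.comap Z' inferInstance]) ω
    Integrable (fun ω => k (Gfo ω) (Gfo' ω)) μ →
    Integrable (fun ω => k (Gtot ω) (Gtot' ω)) μ →
    ∫ ω, k (Gfo ω) (Gfo' ω) ∂μ ≤ ∫ ω, k (Gtot ω) (Gtot' ω) ∂μ := by
  intro m Gfo Gfo' Gtot Gtot' hIfo hItot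
  have hpm : Measurable fun ω => (X ω, Z ω) := hX.prodMk hZ
  have hpm' : Measurable fun ω => (X' ω, Z' ω) := hX'.prodMk hZ'
  haveI : IsProbabilityMeasure (μ.map X) := Measure.isProbabilityMeasure_map hX.aemeasurable
  haveI : IsProbabilityMeasure (μ.map Z) := Measure.isProbabilityMeasure_map hZ.aemeasurable
  set ν := μ.map X with hνdef
  set ρ := μ.map Z with hρdef
  have hlaw : μ.map (fun ω => (X ω, Z ω)) = ν.prod ρ :=
    (indepFun_iff_map_prod_eq_prod_map_map hX.aemeasurable hZ.aemeasurable).mp hXZ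
  have hmap' : μ.map (fun ω => (X' ω, Z' ω)) = ν.prod ρ := by
    rw [← hcopy.map_eq, hlaw]
  have hν' : μ.map X' = ν := by
    have h0 : μ.map X' = (μ.map fun ω => (X' ω, Z' ω)).map Prod.fst := by
      rw [Measure.map_map measurable_fst hpm']
      rfl
    rw [h0, hmap', Measure.map_fst_prod, measure_univ, one_smul]
  have hρ2 : μ.map Z' = ρ := by
    have h0 : μ.map Z' = (μ.map fun ω => (X' ω, Z' ω)).map Prod.snd := by
      rw [Measure.map_map measurable_snd hpm']
      rfl
    rw [h0, hmap', Measure.map_snd_prod, measure_univ, one_smul]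
  have hident : IdentDistrib (fun ω => g (X ω, Z ω)) (fun ω => g (X' ω, Z' ω)) μ μ :=
    hcopy.comp hg
  have hint' : Integrable (fun ω => g (X' ω, Z' ω)) μ := hident.integrable_iff.mp hint
  have hgi : Integrable g (ν.prod ρ) := by
    rw [← hlaw]
    exact (integrable_map_measure hg.stronglyMeasurable.aestronglyMeasurable
      hpm.aemeasurable).mpr hint
  set φ0 : A → EuclideanSpace ℝ (Fin n) := fun x => ∫ z, g (x, z) ∂ρ with hφ0def
  set ψ0 : B → EuclideanSpace ℝ (Fin n) := fun z => ∫ x, g (x, z) ∂ν with hψ0def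
  set Φ : A → EuclideanSpace ℝ (Fin n) := fun x => φ0 x - m with hΦdef
  set Ψ : A × B → EuclideanSpace ℝ (Fin n) := fun q => g q - ψ0 q.2 with hΨdef
  have hφ0sm : StronglyMeasurable φ0 := hg.stronglyMeasurable.integral_prod_right' (ν := ρ)
  have hψ0sm : StronglyMeasurable ψ0 :=
    ((hg.comp (measurable_snd.prodMk measurable_fst)).stronglyMeasurable
      (f := fun q : B × A => g (q.2, q.1))).integral_prod_right' (ν := ν)
  have hΦm : Measurable Φ := hφ0sm.measurable.sub measurable_const
  have hΨm : Measurable Ψ := hg.sub (hψ0sm.measurable.comp measurable_snd)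
  -- conditional expectation identifications
  have h1 : μ[fun ω => g (X ω, Z ω)|MeasurableSpace.comap X inferInstance]
      =ᵐ[μ] fun ω => φ0 (X ω) :=
    condexp_indep_aux μ X Z hX hZ hXZ g hg hint
  have h2 : μ[fun ω => g (X' ω, Z' ω)|MeasurableSpace.comap X' inferInstance]
      =ᵐ[μ] fun ω => φ0 (X' ω) := by
    have h := condexp_indep_aux μ X' Z' hX' hZ' hXZ' g hg hint'
    rw [hρ2] at h
    exact h
  have h3 : μ[fun ω => g (X ω, Z ω)|MeasurableSpace.comap Z inferInstance]
      =ᵐ[μ] fun ω => ψ0 (Z ω) :=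
    condexp_indep_aux μ Z X hZ hX hXZ.symm (fun q => g (q.2, q.1))
      (hg.comp (measurable_snd.prodMk measurable_fst)) hint
  have h4 : μ[fun ω => g (X' ω, Z' ω)|MeasurableSpace.comap Z' inferInstance]
      =ᵐ[μ] fun ω => ψ0 (Z' ω) := by
    have h := condexp_indep_aux μ Z' X' hZ' hX' hXZ'.symm (fun q => g (q.2, q.1))
      (hg.comp (measurable_snd.prodMk measurable_fst)) hint'
    rw [hν'] at h
    exact h
  -- a.e. identities for the ANOVA functionals
  have hGfo : Gfo =ᵐ[μ] fun ω => Φ (X ω) := by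
    filter_upwards [h1] with ω hω
    show (μ[fun ω => g (X ω, Z ω)|MeasurableSpace.comap X inferInstance]) ω - m = Φ (X ω)
    rw [hω]
  have hGfo' : Gfo' =ᵐ[μ] fun ω => Φ (X' ω) := by
    filter_upwards [h2] with ω hω
    show (μ[fun ω => g (X' ω, Z' ω)|MeasurableSpace.comap X' inferInstance]) ω - m = Φ (X' ω)
    rw [hω]
  have hGtot : Gtot =ᵐ[μ] fun ω => Ψ (X ω, Z ω) := by
    filter_upwards [h3] with ω hω
    show g (X ω, Z ω) - (μ[fun ω => g (X ω, Z ω)|MeasurableSpace.comap Z inferInstance]) ω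
      = Ψ (X ω, Z ω)
    rw [hω]
  have hGtot' : Gtot' =ᵐ[μ] fun ω => Ψ (X' ω, Z' ω) := by
    filter_upwards [h4] with ω hω
    show g (X' ω, Z' ω)
        - (μ[fun ω => g (X' ω, Z' ω)|MeasurableSpace.comap Z' inferInstance]) ω
      = Ψ (X' ω, Z' ω)
    rw [hω]
  -- laws of the pairs
  have hXX'ind : IndepFun X X' μ := hpair.comp measurable_fst measurable_fst
  have hXX' : μ.map (fun ω => (X ω, X' ω)) = ν.prod ν := by
    rw [(indepFun_iff_map_prod_eq_prod_map_map hX.aemeasurable hX'.aemeasurable).mp hXX'ind,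
      hν']
  have hquad : μ.map (fun ω => ((X ω, Z ω), (X' ω, Z' ω))) = (ν.prod ρ).prod (ν.prod ρ) := by
    rw [(indepFun_iff_map_prod_eq_prod_map_map hpm.aemeasurable hpm'.aemeasurable).mp hpair,
      hlaw, hmap']
  -- measurability of the integrands
  have hkΦ : Measurable fun p : A × A => k (Φ p.1) (Φ p.2) := by
    have h0 : (fun p : A × A => k (Φ p.1) (Φ p.2))
        = Function.uncurry k ∘ fun p : A × A => (Φ p.1, Φ p.2) := rfl
    rw [h0]
    exact hmeas.comp ((hΦm.comp measurable_fst).prodMk (hΦm.comp measurable_snd))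
  have hkΨ : Measurable fun p : (A × B) × (A × B) => k (Ψ p.1) (Ψ p.2) := by
    have h0 : (fun p : (A × B) × (A × B) => k (Ψ p.1) (Ψ p.2))
        = Function.uncurry k ∘ fun p : (A × B) × (A × B) => (Ψ p.1, Ψ p.2) := rfl
    rw [h0]
    exact hmeas.comp ((hΨm.comp measurable_fst).prodMk (hΨm.comp measurable_snd))
  -- congruences
  have hcong1 : (fun ω => k (Gfo ω) (Gfo' ω)) =ᵐ[μ] fun ω => k (Φ (X ω)) (Φ (X' ω)) := by
    filter_upwards [hGfo, hGfo'] with ω e1 e2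
    rw [e1, e2]
  have hcong2 : (fun ω => k (Gtot ω) (Gtot' ω))
      =ᵐ[μ] fun ω => k (Ψ (X ω, Z ω)) (Ψ (X' ω, Z' ω)) := by
    filter_upwards [hGtot, hGtot'] with ω e1 e2
    rw [e1, e2]
  -- integrability on product spaces
  have hI1 : Integrable (fun p : A × A => k (Φ p.1) (Φ p.2)) (ν.prod ν) := by
    rw [← hXX']
    exact (integrable_map_measure hkΦ.aestronglyMeasurable
      (hX.prodMk hX').aemeasurable).mpr (hIfo.congr hcong1)
  have hI2 : Integrable (fun p : (A × B) × (A × B) => k (Ψ p.1) (Ψ p.2))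
      ((ν.prod ρ).prod (ν.prod ρ)) := by
    rw [← hquad]
    exact (integrable_map_measure hkΨ.aestronglyMeasurable
      (hpm.prodMk hpm').aemeasurable).mpr (hItot.congr hcong2)
  -- rewriting both sides as integrals over product measures
  have hL : ∫ ω, k (Gfo ω) (Gfo' ω) ∂μ = ∫ p, k (Φ p.1) (Φ p.2) ∂(ν.prod ν) := by
    rw [integral_congr_ae hcong1]
    have h := integral_map (μ := μ) (hX.prodMk hX').aemeasurable hkΦ.aestronglyMeasurable
    rw [hXX'] at h
    exact h.symm
  have hR : ∫ ω, k (Gtot ω) (Gtot' ω) ∂μ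
      = ∫ p, k (Ψ p.1) (Ψ p.2) ∂((ν.prod ρ).prod (ν.prod ρ)) := by
    rw [integral_congr_ae hcong2]
    have h := integral_map (μ := μ) (hpm.prodMk hpm').aemeasurable hkΨ.aestronglyMeasurable
    rw [hquad] at h
    exact h.symm
  -- the mean identity ∫ ψ0 = m
  have hψ0i : Integrable ψ0 ρ := hgi.swap.integral_prod_left
  have hmean : ∫ z, ψ0 z ∂ρ = m := by
    have h5 : ∫ p, g p ∂(ν.prod ρ) = m := by
      have h := integral_map (μ := μ) hpm.aemeasurable
        hg.stronglyMeasurable.aestronglyMeasurable (f := g)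
      rw [hlaw] at h
      exact h
    have h6 : ∫ p, g p ∂(ν.prod ρ) = ∫ z, ψ0 z ∂ρ := by
      rw [← integral_prod_swap g, integral_prod (fun z : B × A => g z.swap) hgi.swap]
      rfl
    rw [← h6]
    exact h5
  have hΦae : ∀ᵐ x ∂ν, Φ x = ∫ z, Ψ (x, z) ∂ρ := by
    filter_upwards [hgi.prod_right_ae] with x hx
    have h7 : ∫ z, Ψ (x, z) ∂ρ = (∫ z, g (x, z) ∂ρ) - ∫ z, ψ0 z ∂ρ :=
      integral_sub hx hψ0i
    rw [h7, hmean]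
  have hΨi : Integrable Ψ (ν.prod ρ) := by
    refine hgi.sub ?_
    have h8 : Integrable ψ0 (Measure.map Prod.snd (ν.prod ρ)) := by
      rw [Measure.map_snd_prod, measure_univ, one_smul]
      exact hψ0i
    exact (integrable_map_measure hψ0sm.aestronglyMeasurable
      measurable_snd.aemeasurable).mp h8
  rw [hL, hR]
  exact key_ineq ν ρ Ψ hΨm hΨi Φ hΦm hΦae k hsym hconv hmeas hI1 hI2
end

section
/- (Monotonicity of discrepancy in subsets, first-order case) Let X_w, Z_{w0}, Z_{~u} be mutually independent random vectors and g integrable. Set G_w^{fo} := E_{Z_{w0}, Z_{~u}}[g] − E[g] and G_u^{fo} := E_{Z_{~u}}[g] − E[g], so that G_w^{fo} = E_{Z_{w0}}[G_u^{fo}]. If k is a convex positive definite kernel (in each argument), then E[k(G_w^{fo}, G_w^{fo'})] ≤ E[k(G_u^{fo}, G_u^{fo'})], where primes denote evaluation at independent copies. -/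
/-!
Conditioning on `X_w` amounts to conditioning on `(X_w, Z_{w0})` and then averaging out `Z_{w0}`;
by independence this average is an integral against the law `ν` of `Z_{w0}`, so
`G_w(x) = ∫ G_u(x, z) dν(z)`. For fixed `x, x'`, Jensen's inequality applied to `k` in each
argument separately, over two independent copies of `Z_{w0}`, gives
`k(G_w(x), G_w(x')) ≤ ∫∫ k(G_u(x, z), G_u(x', z')) dν(z) dν(z')`, and integrating over the
independent pair `(x, x')` gives the claim.
-/

open MeasureTheory ProbabilityTheory Set

theorem measurePreserving_prodProdProdComm {α β γ δ : Type*} [MeasurableSpace α]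
    [MeasurableSpace β] [MeasurableSpace γ] [MeasurableSpace δ] (μa : Measure α) (μb : Measure β)
    (μc : Measure γ) (μd : Measure δ) [SFinite μa] [SFinite μb] [SFinite μc] [SFinite μd] :
    MeasurePreserving (Equiv.prodProdProdComm α β γ δ) ((μa.prod μb).prod (μc.prod μd))
      ((μa.prod μc).prod (μb.prod μd)) := by
  have middle : MeasurePreserving (fun p : β × γ × δ => (p.2.1, p.1, p.2.2))
      (μb.prod (μc.prod μd)) (μc.prod (μb.prod μd)) :=
    (measurePreserving_prodAssoc μc μb μd).comp <|
      ((Measure.measurePreserving_swap).prod (MeasurePreserving.id μd)).comp <|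
        (measurePreserving_prodAssoc μb μc μd).symm MeasurableEquiv.prodAssoc
  exact ((measurePreserving_prodAssoc μa μc (μb.prod μd)).symm MeasurableEquiv.prodAssoc).comp <|
    ((MeasurePreserving.id μa).prod middle).comp (measurePreserving_prodAssoc μa μb (μc.prod μd))

section Jensen

variable {α β E : Type*} [MeasurableSpace α] [MeasurableSpace β]
  [NormedAddCommGroup E] [NormedSpace ℝ E] [CompleteSpace E]

/-- Unlike `ConvexOn.map_integral_le`, this needs no integrability of `φ ∘ f`:
`(∫ f, ∫ G)` is the integral of a function with values in the closed convex epigraph of `φ`. -/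
theorem ConvexOn.map_integral_le_of_ae_le {μ : Measure α} [IsProbabilityMeasure μ] {s : Set E}
    {φ : E → ℝ} {f : α → E} {G : α → ℝ} (hφ : ConvexOn ℝ s φ)
    (hφc : LowerSemicontinuousOn φ s) (hs : IsClosed s) (hfs : ∀ᵐ x ∂μ, f x ∈ s)
    (hf : Integrable f μ) (hG : Integrable G μ) (hle : ∀ᵐ x ∂μ, φ (f x) ≤ G x) :
    φ (∫ x, f x ∂μ) ≤ ∫ x, G x ∂μ := by
  have h := hφ.convex_epigraph.integral_mem ((lowerSemicontinuousOn_iff_isClosed_epigraph hs).1 hφc)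
    (hfs.and hle) (hf.prodMk hG)
  rw [integral_pair hf hG] at h
  exact h.2

theorem map₂_integral_le_integral_prod {μ : Measure α} {ν : Measure β} [IsProbabilityMeasure μ]
    [IsProbabilityMeasure ν] {k : E → E → ℝ} (hk₁ : ∀ y, ConvexOn ℝ univ (k · y))
    (hk₂ : ∀ x, ConvexOn ℝ univ (k x)) (hk₁c : ∀ y, LowerSemicontinuous (k · y))
    (hk₂c : ∀ x, LowerSemicontinuous (k x)) {f : α → E} {g : β → E} (hf : Integrable f μ)
    (hg : Integrable g ν) (hfg : Integrable (fun p => k (f p.1) (g p.2)) (μ.prod ν)) :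
    k (∫ x, f x ∂μ) (∫ y, g y ∂ν) ≤ ∫ p, k (f p.1) (g p.2) ∂(μ.prod ν) := by
  have inner : ∀ᵐ x ∂μ, k (f x) (∫ y, g y ∂ν) ≤ ∫ y, k (f x) (g y) ∂ν := by
    filter_upwards [hfg.prod_right_ae] with x hx
    exact (hk₂ _).map_integral_le_of_ae_le ((hk₂c _).lowerSemicontinuousOn _) isClosed_univ
      (by simp) hg hx (.of_forall fun _ => le_rfl)
  rw [integral_prod _ hfg]
  exact (hk₁ _).map_integral_le_of_ae_le ((hk₁c _).lowerSemicontinuousOn _) isClosed_univ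
    (by simp) hf hfg.integral_prod_left inner

theorem integral_map₂_integral_le {ρ : Measure α} {ν : Measure β} [IsProbabilityMeasure ρ]
    [IsProbabilityMeasure ν] {k : E → E → ℝ} (hk₁ : ∀ y, ConvexOn ℝ univ (k · y))
    (hk₂ : ∀ x, ConvexOn ℝ univ (k x)) (hk₁c : ∀ y, LowerSemicontinuous (k · y))
    (hk₂c : ∀ x, LowerSemicontinuous (k x)) {H : α × β → E} (hH : Integrable H (ρ.prod ν))
    (hkavg : Integrable (fun x : α × α => k (∫ y, H (x.1, y) ∂ν) (∫ y, H (x.2, y) ∂ν)) (ρ.prod ρ))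
    (hkH : Integrable (fun p : (α × β) × (α × β) => k (H p.1) (H p.2))
      ((ρ.prod ν).prod (ρ.prod ν))) :
    ∫ x, k (∫ y, H (x.1, y) ∂ν) (∫ y, H (x.2, y) ∂ν) ∂(ρ.prod ρ)
      ≤ ∫ p, k (H p.1) (H p.2) ∂((ρ.prod ν).prod (ρ.prod ν)) := by
  set Φ : (α × α) × (β × β) → ℝ := fun q => k (H (q.1.1, q.2.1)) (H (q.1.2, q.2.2))
  have e := measurePreserving_prodProdProdComm ρ ρ ν ν
  have hΦ : Integrable Φ ((ρ.prod ρ).prod (ν.prod ν)) :=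
    (e.integrable_comp (e.map_eq ▸ hkH.aestronglyMeasurable)).2 hkH
  have hslices : ∀ᵐ x ∂ρ, Integrable (fun y => H (x, y)) ν := hH.prod_right_ae
  calc ∫ x, k (∫ y, H (x.1, y) ∂ν) (∫ y, H (x.2, y) ∂ν) ∂(ρ.prod ρ)
      ≤ ∫ x, ∫ y, Φ (x, y) ∂(ν.prod ν) ∂(ρ.prod ρ) := by
        refine integral_mono_ae hkavg hΦ.integral_prod_left ?_
        filter_upwards [Measure.quasiMeasurePreserving_fst.ae hslices,
          Measure.quasiMeasurePreserving_snd.ae hslices, hΦ.prod_right_ae] with x h₁ h₂ hx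
        exact map₂_integral_le_integral_prod hk₁ hk₂ hk₁c hk₂c h₁ h₂ hx
    _ = ∫ q, Φ q ∂((ρ.prod ρ).prod (ν.prod ν)) := (integral_prod _ hΦ).symm
    _ = ∫ p, k (H p.1) (H p.2) ∂((ρ.prod ν).prod (ρ.prod ν)) := by
        rw [← e.map_eq, integral_map e.measurable.aemeasurable
          (e.map_eq ▸ hkH.aestronglyMeasurable)]
        rfl

end Jensen

theorem condExp_sub_const {α E : Type*} [NormedAddCommGroup E] [NormedSpace ℝ E]
    [CompleteSpace E] {m m₀ : MeasurableSpace α} {μ : Measure α} [IsFiniteMeasure μ]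
    (hm : m ≤ m₀) {f : α → E} (hf : Integrable f μ) (c : E) :
    μ[fun ω => f ω - c | m] =ᵐ[μ] fun ω => μ[f | m] ω - c := by
  have h := condExp_sub hf (integrable_const c) m
  rwa [condExp_const hm] at h

section CondExp

variable {Ω S T U E : Type*} {mΩ : MeasurableSpace Ω} [MeasurableSpace S] [MeasurableSpace T]
  [MeasurableSpace U] [NormedAddCommGroup E] [NormedSpace ℝ E] [CompleteSpace E]
  {μ : Measure Ω} [IsProbabilityMeasure μ]

theorem condExp_comap_ae_eq_integral_of_indepFun {X : Ω → S} {Y : Ω → T} (hX : Measurable X)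
    (hY : Measurable Y) (hXY : IndepFun X Y μ) {f : S × T → E} (hf : StronglyMeasurable f)
    (hfi : Integrable (fun ω => f (X ω, Y ω)) μ) :
    μ[fun ω => f (X ω, Y ω) | MeasurableSpace.comap X inferInstance]
      =ᵐ[μ] fun ω => ∫ y, f (X ω, y) ∂(μ.map Y) := by
  set ρ := μ.map X
  set ν := μ.map Y
  have hlaw : μ.map (fun ω => (X ω, Y ω)) = ρ.prod ν :=
    (indepFun_iff_map_prod_eq_prod_map_map hX.aemeasurable hY.aemeasurable).1 hXY
  have hf_int : Integrable f (ρ.prod ν) :=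
    hlaw ▸ (integrable_map_measure hf.aestronglyMeasurable (hX.prodMk hY).aemeasurable).2 hfi
  have hF : StronglyMeasurable fun x => ∫ y, f (x, y) ∂ν := hf.integral_prod_right'
  have hFi : Integrable (fun ω => ∫ y, f (X ω, y) ∂ν) μ :=
    (integrable_map_measure hF.aestronglyMeasurable hX.aemeasurable).1 hf_int.integral_prod_left
  refine (ae_eq_condExp_of_forall_setIntegral_eq hX.comap_le hfi
    (fun _ _ _ => hFi.integrableOn) ?_ ?_).symm
  · rintro _ ⟨t, ht, rfl⟩ -
    calc ∫ ω in X ⁻¹' t, ∫ y, f (X ω, y) ∂ν ∂μ = ∫ x in t, ∫ y, f (x, y) ∂ν ∂ρ :=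
          (setIntegral_map ht hF.aestronglyMeasurable hX.aemeasurable).symm
      _ = ∫ p in t ×ˢ univ, f p ∂(ρ.prod ν) := by
          rw [setIntegral_prod _ hf_int.integrableOn, Measure.restrict_univ]
      _ = ∫ ω in X ⁻¹' t, f (X ω, Y ω) ∂μ := by
          rw [← hlaw, setIntegral_map (ht.prod .univ) hf.aestronglyMeasurable
            (hX.prodMk hY).aemeasurable]
          simp [mk_preimage_prod]
  · exact (hF.comp_measurable (comap_measurable X)).aestronglyMeasurable

theorem condExp_comap_ae_eq_integral_integral_of_indepFun {X : Ω → S} {Y : Ω → T} {Z : Ω → U}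
    (hX : Measurable X) (hY : Measurable Y) (hZ : Measurable Z) (hXY : IndepFun X Y μ)
    (hXYZ : IndepFun (fun ω => (X ω, Y ω)) Z μ) {f : S × T × U → E} (hf : StronglyMeasurable f)
    (hfi : Integrable (fun ω => f (X ω, Y ω, Z ω)) μ) :
    μ[fun ω => f (X ω, Y ω, Z ω) | MeasurableSpace.comap X inferInstance]
      =ᵐ[μ] fun ω => ∫ y, ∫ z, f (X ω, y, z) ∂(μ.map Z) ∂(μ.map Y) := by
  have hf' : StronglyMeasurable fun p : (S × T) × U => f (p.1.1, p.1.2, p.2) :=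
    hf.comp_measurable (measurable_fst.fst.prodMk (measurable_fst.snd.prodMk measurable_snd))
  have inner := condExp_comap_ae_eq_integral_of_indepFun (hX.prodMk hY) hZ hXYZ hf' hfi
  have hle : MeasurableSpace.comap X inferInstance
      ≤ MeasurableSpace.comap (fun ω => (X ω, Y ω)) inferInstance :=
    (measurable_fst.comp (comap_measurable (fun ω => (X ω, Y ω)))).comap_le
  calc μ[fun ω => f (X ω, Y ω, Z ω) | MeasurableSpace.comap X inferInstance]
      =ᵐ[μ] μ[μ[fun ω => f (X ω, Y ω, Z ω) | MeasurableSpace.comap (fun ω => (X ω, Y ω))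
        inferInstance] | MeasurableSpace.comap X inferInstance] :=
        (condExp_condExp_of_le hle (hX.prodMk hY).comap_le).symm
    _ =ᵐ[μ] μ[fun ω => ∫ z, f (X ω, Y ω, z) ∂(μ.map Z) | MeasurableSpace.comap X inferInstance] :=
        condExp_congr_ae inner
    _ =ᵐ[μ] fun ω => ∫ y, ∫ z, f (X ω, y, z) ∂(μ.map Z) ∂(μ.map Y) :=
        condExp_comap_ae_eq_integral_of_indepFun hX hY hXY hf'.integral_prod_right'
          (integrable_condExp.congr inner)

end CondExp

section Discrepancy

variable {Ω S T U E : Type*} {mΩ : MeasurableSpace Ω} [MeasurableSpace S] [MeasurableSpace T]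
  [MeasurableSpace U] [NormedAddCommGroup E] [NormedSpace ℝ E] [CompleteSpace E]
  [MeasurableSpace E] [BorelSpace E]
  {μ : Measure Ω} [IsProbabilityMeasure μ]

theorem integral_map₂_integral_le_of_indepFun {X X' : Ω → S} {Y Y' : Ω → T}
    (hXY : IndepFun X Y μ) (hpair : IndepFun (fun ω => (X ω, Y ω)) (fun ω => (X' ω, Y' ω)) μ)
    (hcopy : IdentDistrib (fun ω => (X ω, Y ω)) (fun ω => (X' ω, Y' ω)) μ μ)
    {k : E → E → ℝ} (hk₁ : ∀ y, ConvexOn ℝ univ (k · y))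
    (hk₂ : ∀ x, ConvexOn ℝ univ (k x)) (hk₁c : ∀ y, LowerSemicontinuous (k · y))
    (hk₂c : ∀ x, LowerSemicontinuous (k x)) (hk : Measurable (Function.uncurry k))
    {H : S × T → E} (hH : StronglyMeasurable H) (hHi : Integrable (fun ω => H (X ω, Y ω)) μ)
    (hkavg : Integrable (fun ω => k (∫ y, H (X ω, y) ∂(μ.map Y)) (∫ y, H (X' ω, y) ∂(μ.map Y))) μ)
    (hkH : Integrable (fun ω => k (H (X ω, Y ω)) (H (X' ω, Y' ω))) μ) :
    ∫ ω, k (∫ y, H (X ω, y) ∂(μ.map Y)) (∫ y, H (X' ω, y) ∂(μ.map Y)) ∂μ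
      ≤ ∫ ω, k (H (X ω, Y ω)) (H (X' ω, Y' ω)) ∂μ := by
  set ρ := μ.map X
  set ν := μ.map Y
  have hV := hcopy.aemeasurable_fst
  have hV' := hcopy.aemeasurable_snd
  have hX : AEMeasurable X μ := hV.fst
  have hX' : AEMeasurable X' μ := hV'.fst
  have hlaw : μ.map (fun ω => (X ω, Y ω)) = ρ.prod ν :=
    (indepFun_iff_map_prod_eq_prod_map_map hX hV.snd).1 hXY
  have : IsProbabilityMeasure ρ := Measure.isProbabilityMeasure_map hX
  have : IsProbabilityMeasure ν := Measure.isProbabilityMeasure_map hV.snd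
  have hlaw₁ : μ.map (fun ω => (X ω, X' ω)) = ρ.prod ρ := by
    have hX'law : μ.map X' = ρ := (hcopy.comp measurable_fst).map_eq.symm
    rw [(indepFun_iff_map_prod_eq_prod_map_map hX hX').1
      (hpair.comp measurable_fst measurable_fst), hX'law]
  have hlaw₂ : μ.map (fun ω => ((X ω, Y ω), (X' ω, Y' ω))) = (ρ.prod ν).prod (ρ.prod ν) := by
    rw [(indepFun_iff_map_prod_eq_prod_map_map hV hV').1 hpair, ← hcopy.map_eq, hlaw]
  have hHavg : Measurable fun x => ∫ y, H (x, y) ∂ν := hH.integral_prod_right'.measurable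
  have hΦavg : Measurable fun x : S × S => k (∫ y, H (x.1, y) ∂ν) (∫ y, H (x.2, y) ∂ν) :=
    hk.comp ((hHavg.comp measurable_fst).prodMk (hHavg.comp measurable_snd))
  have hΦ : Measurable fun p : (S × T) × (S × T) => k (H p.1) (H p.2) :=
    hk.comp ((hH.measurable.comp measurable_fst).prodMk (hH.measurable.comp measurable_snd))
  have e₁ : ∫ ω, k (∫ y, H (X ω, y) ∂ν) (∫ y, H (X' ω, y) ∂ν) ∂μ
      = ∫ x, k (∫ y, H (x.1, y) ∂ν) (∫ y, H (x.2, y) ∂ν) ∂(ρ.prod ρ) := by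
    rw [← hlaw₁, integral_map (hX.prodMk hX') hΦavg.aestronglyMeasurable]
  have e₂ : ∫ ω, k (H (X ω, Y ω)) (H (X' ω, Y' ω)) ∂μ
      = ∫ p, k (H p.1) (H p.2) ∂((ρ.prod ν).prod (ρ.prod ν)) := by
    rw [← hlaw₂, integral_map (hV.prodMk hV') hΦ.aestronglyMeasurable]
  rw [e₁, e₂]
  refine integral_map₂_integral_le hk₁ hk₂ hk₁c hk₂c ?_ ?_ ?_
  · rw [← hlaw]
    exact (integrable_map_measure hH.aestronglyMeasurable hV).2 hHi
  · rw [← hlaw₁]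
    exact (integrable_map_measure hΦavg.aestronglyMeasurable (hX.prodMk hX')).2 hkavg
  · rw [← hlaw₂]
    exact (integrable_map_measure hΦ.aestronglyMeasurable (hV.prodMk hV')).2 hkH

theorem integral_map₂_condExp_le_of_indepFun {X X' : Ω → S} {Y Y' : Ω → T} {Z Z' : Ω → U}
    (hX : Measurable X) (hY : Measurable Y) (hZ : Measurable Z)
    (hX' : Measurable X') (hY' : Measurable Y') (hZ' : Measurable Z')
    (hXY : IndepFun X Y μ) (hXYZ : IndepFun (fun ω => (X ω, Y ω)) Z μ)
    (hXY' : IndepFun X' Y' μ) (hXYZ' : IndepFun (fun ω => (X' ω, Y' ω)) Z' μ)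
    (hcopy : IdentDistrib (fun ω => (X ω, Y ω, Z ω)) (fun ω => (X' ω, Y' ω, Z' ω)) μ μ)
    (hpair : IndepFun (fun ω => (X ω, Y ω, Z ω)) (fun ω => (X' ω, Y' ω, Z' ω)) μ)
    {f : S × T × U → E} (hf : StronglyMeasurable f)
    (hfi : Integrable (fun ω => f (X ω, Y ω, Z ω)) μ)
    {k : E → E → ℝ} (hk₁ : ∀ y, ConvexOn ℝ univ (k · y))
    (hk₂ : ∀ x, ConvexOn ℝ univ (k x)) (hk₁c : ∀ y, LowerSemicontinuous (k · y))
    (hk₂c : ∀ x, LowerSemicontinuous (k x)) (hk : Measurable (Function.uncurry k))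
    (hkw : Integrable (fun ω =>
      k (μ[fun ω => f (X ω, Y ω, Z ω) | MeasurableSpace.comap X inferInstance] ω)
        (μ[fun ω => f (X' ω, Y' ω, Z' ω) | MeasurableSpace.comap X' inferInstance] ω)) μ)
    (hku : Integrable (fun ω =>
      k (μ[fun ω => f (X ω, Y ω, Z ω) |
          MeasurableSpace.comap (fun ω => (X ω, Y ω)) inferInstance] ω)
        (μ[fun ω => f (X' ω, Y' ω, Z' ω) |
          MeasurableSpace.comap (fun ω => (X' ω, Y' ω)) inferInstance] ω)) μ) :
    ∫ ω, k (μ[fun ω => f (X ω, Y ω, Z ω) | MeasurableSpace.comap X inferInstance] ω)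
        (μ[fun ω => f (X' ω, Y' ω, Z' ω) | MeasurableSpace.comap X' inferInstance] ω) ∂μ
      ≤ ∫ ω, k (μ[fun ω => f (X ω, Y ω, Z ω) |
          MeasurableSpace.comap (fun ω => (X ω, Y ω)) inferInstance] ω)
        (μ[fun ω => f (X' ω, Y' ω, Z' ω) |
          MeasurableSpace.comap (fun ω => (X' ω, Y' ω)) inferInstance] ω) ∂μ := by
  have hf' : StronglyMeasurable fun p : (S × T) × U => f (p.1.1, p.1.2, p.2) :=
    hf.comp_measurable (measurable_fst.fst.prodMk (measurable_fst.snd.prodMk measurable_snd))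
  have hfi' := (hcopy.comp hf.measurable).integrable_iff.1 hfi
  have hYlaw : μ.map Y' = μ.map Y := (hcopy.comp (measurable_fst.comp measurable_snd)).map_eq.symm
  have hZlaw : μ.map Z' = μ.map Z := (hcopy.comp (measurable_snd.comp measurable_snd)).map_eq.symm
  have hu := condExp_comap_ae_eq_integral_of_indepFun (hX.prodMk hY) hZ hXYZ hf' hfi
  have hu' := condExp_comap_ae_eq_integral_of_indepFun (hX'.prodMk hY') hZ' hXYZ' hf' hfi'
  have hw := condExp_comap_ae_eq_integral_integral_of_indepFun hX hY hZ hXY hXYZ hf hfi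
  have hw' := condExp_comap_ae_eq_integral_integral_of_indepFun hX' hY' hZ' hXY' hXYZ' hf hfi'
  rw [hZlaw] at hu'
  rw [hYlaw, hZlaw] at hw'
  have hXY₂ : Measurable fun p : S × T × U => (p.1, p.2.1) :=
    measurable_fst.prodMk measurable_snd.fst
  rw [integral_congr_ae (hw.comp₂ k hw'), integral_congr_ae (hu.comp₂ k hu')]
  exact integral_map₂_integral_le_of_indepFun hXY (hpair.comp hXY₂ hXY₂) (hcopy.comp hXY₂)
    hk₁ hk₂ hk₁c hk₂c hk hf'.integral_prod_right' (integrable_condExp.congr hu)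
    (hkw.congr (hw.comp₂ k hw')) (hku.congr (hu.comp₂ k hu'))

end Discrepancy

theorem kernel_firstOrder_monotone_in_subsets_general
    {Ω A B C : Type*} [MeasurableSpace Ω] [MeasurableSpace A] [MeasurableSpace B]
    [MeasurableSpace C]
    (μ : Measure Ω) [IsProbabilityMeasure μ] {n : ℕ}
    (X X' : Ω → A) (Z1 Z1' : Ω → B) (Z2 Z2' : Ω → C)
    (hX : Measurable X) (hZ1 : Measurable Z1) (hZ2 : Measurable Z2)
    (hX' : Measurable X') (hZ1' : Measurable Z1') (hZ2' : Measurable Z2')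
    (hind1 : IndepFun X Z1 μ) (hind2 : IndepFun (fun ω => (X ω, Z1 ω)) Z2 μ)
    (hind1' : IndepFun X' Z1' μ) (hind2' : IndepFun (fun ω => (X' ω, Z1' ω)) Z2' μ)
    (hcopy : IdentDistrib (fun ω => (X ω, Z1 ω, Z2 ω))
      (fun ω => (X' ω, Z1' ω, Z2' ω)) μ μ)
    (hpair : IndepFun (fun ω => (X ω, Z1 ω, Z2 ω)) (fun ω => (X' ω, Z1' ω, Z2' ω)) μ)
    (g : A × B × C → EuclideanSpace ℝ (Fin n)) (hg : Measurable g)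
    (hint : Integrable (fun ω => g (X ω, Z1 ω, Z2 ω)) μ)
    (k : EuclideanSpace ℝ (Fin n) → EuclideanSpace ℝ (Fin n) → ℝ)
    (hsym : ∀ r r', k r r' = k r' r)
    (hconv : ∀ r', ConvexOn ℝ Set.univ (fun r => k r r'))
    (hmeas : Measurable (Function.uncurry k)) :
    let m := ∫ ω, g (X ω, Z1 ω, Z2 ω) ∂μ
    let Gw := fun ω =>
      (μ[fun ω => g (X ω, Z1 ω, Z2 ω)|MeasurableSpace.comap X inferInstance]) ω - m
    let Gw' := fun ω =>
      (μ[fun ω => g (X' ω, Z1' ω, Z2' ω)|MeasurableSpace.comap X' inferInstance]) ω - m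
    let Gu := fun ω =>
      (μ[fun ω => g (X ω, Z1 ω, Z2 ω)|MeasurableSpace.comap
        (fun ω => (X ω, Z1 ω)) inferInstance]) ω - m
    let Gu' := fun ω =>
      (μ[fun ω => g (X' ω, Z1' ω, Z2' ω)|MeasurableSpace.comap
        (fun ω => (X' ω, Z1' ω)) inferInstance]) ω - m
    Integrable (fun ω => k (Gw ω) (Gw' ω)) μ →
    Integrable (fun ω => k (Gu ω) (Gu' ω)) μ →
    ∫ ω, k (Gw ω) (Gw' ω) ∂μ ≤ ∫ ω, k (Gu ω) (Gu' ω) ∂μ := by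
  intro m Gw Gw' Gu Gu' hIw hIu
  have hk₂ : ∀ r, ConvexOn ℝ univ (k r) := fun r => (funext (hsym r)).symm ▸ hconv r
  have hk₁c : ∀ r', LowerSemicontinuous (k · r') := fun r' =>
    (continuousOn_univ.1 ((hconv r').continuousOn isOpen_univ)).lowerSemicontinuous
  have hk₂c : ∀ r, LowerSemicontinuous (k r) := fun r =>
    (continuousOn_univ.1 ((hk₂ r).continuousOn isOpen_univ)).lowerSemicontinuous
  have hint' : Integrable (fun ω => g (X' ω, Z1' ω, Z2' ω)) μ :=
    (hcopy.comp hg).integrable_iff.1 hint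
  have hw := (condExp_sub_const hX.comap_le hint m).symm
  have hw' := (condExp_sub_const hX'.comap_le hint' m).symm
  have hu := (condExp_sub_const (hX.prodMk hZ1).comap_le hint m).symm
  have hu' := (condExp_sub_const (hX'.prodMk hZ1').comap_le hint' m).symm
  calc ∫ ω, k (Gw ω) (Gw' ω) ∂μ = _ := integral_congr_ae (hw.comp₂ k hw')
    _ ≤ _ := integral_map₂_condExp_le_of_indepFun hX hZ1 hZ2 hX' hZ1' hZ2' hind1 hind2 hind1'
        hind2' hcopy hpair (hg.sub measurable_const).stronglyMeasurable
        (hint.sub (integrable_const m)) hconv hk₂ hk₁c hk₂c hmeas (hIw.congr (hw.comp₂ k hw'))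
        (hIu.congr (hu.comp₂ k hu'))
    _ = ∫ ω, k (Gu ω) (Gu' ω) ∂μ := (integral_congr_ae (hu.comp₂ k hu')).symm

/-- monotonicity of discrepancy in subsets, first-order case:
with `X_w, Z_{w0}, Z_{~u}` mutually independent and `k` a convex symmetric
positive-definite kernel, `E[k(G_w^{fo}, G_w^{fo'})] ≤ E[k(G_u^{fo}, G_u^{fo'})]`,
where `G_w^{fo} = E[g|σ(X_w)] - E[g]` and `G_u^{fo} = E[g|σ(X_w,Z_{w0})] - E[g]`. -/
theorem kernel_firstOrder_monotone_in_subsets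
    {Ω A B C : Type*} [MeasurableSpace Ω] [MeasurableSpace A] [MeasurableSpace B]
    [MeasurableSpace C]
    (μ : Measure Ω) [IsProbabilityMeasure μ] {n : ℕ}
    (X X' : Ω → A) (Z1 Z1' : Ω → B) (Z2 Z2' : Ω → C)
    (hX : Measurable X) (hZ1 : Measurable Z1) (hZ2 : Measurable Z2)
    (hX' : Measurable X') (hZ1' : Measurable Z1') (hZ2' : Measurable Z2')
    (hind1 : IndepFun X Z1 μ) (hind2 : IndepFun (fun ω => (X ω, Z1 ω)) Z2 μ)
    (hind1' : IndepFun X' Z1' μ) (hind2' : IndepFun (fun ω => (X' ω, Z1' ω)) Z2' μ)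
    (hcopy : IdentDistrib (fun ω => (X ω, Z1 ω, Z2 ω))
      (fun ω => (X' ω, Z1' ω, Z2' ω)) μ μ)
    (hpair : IndepFun (fun ω => (X ω, Z1 ω, Z2 ω)) (fun ω => (X' ω, Z1' ω, Z2' ω)) μ)
    (g : A × B × C → EuclideanSpace ℝ (Fin n)) (hg : Measurable g)
    (hint : Integrable (fun ω => g (X ω, Z1 ω, Z2 ω)) μ)
    (k : EuclideanSpace ℝ (Fin n) → EuclideanSpace ℝ (Fin n) → ℝ)
    (hsym : ∀ r r', k r r' = k r' r)
    (hposdef : ∀ (m : ℕ) (x : Fin m → EuclideanSpace ℝ (Fin n)) (c : Fin m → ℝ),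
      0 ≤ ∑ i, ∑ j, c i * c j * k (x i) (x j))
    (hconv : ∀ r', ConvexOn ℝ Set.univ (fun r => k r r'))
    (hmeas : Measurable (Function.uncurry k)) :
    let m := ∫ ω, g (X ω, Z1 ω, Z2 ω) ∂μ
    let Gw := fun ω =>
      (μ[fun ω => g (X ω, Z1 ω, Z2 ω)|MeasurableSpace.comap X inferInstance]) ω - m
    let Gw' := fun ω =>
      (μ[fun ω => g (X' ω, Z1' ω, Z2' ω)|MeasurableSpace.comap X' inferInstance]) ω - m
    let Gu := fun ω =>
      (μ[fun ω => g (X ω, Z1 ω, Z2 ω)|MeasurableSpace.comap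
        (fun ω => (X ω, Z1 ω)) inferInstance]) ω - m
    let Gu' := fun ω =>
      (μ[fun ω => g (X' ω, Z1' ω, Z2' ω)|MeasurableSpace.comap
        (fun ω => (X' ω, Z1' ω)) inferInstance]) ω - m
    Integrable (fun ω => k (Gw ω) (Gw' ω)) μ →
    Integrable (fun ω => k (Gu ω) (Gu' ω)) μ →
    ∫ ω, k (Gw ω) (Gw' ω) ∂μ ≤ ∫ ω, k (Gu ω) (Gu' ω) ∂μ :=
  kernel_firstOrder_monotone_in_subsets_general μ X X' Z1 Z1' Z2 Z2' hX hZ1 hZ2 hX' hZ1' hZ2' hind1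
    hind2 hind1' hind2' hcopy hpair g hg hint k hsym hconv hmeas
end

section
/- The Gaussian kernel k(y,y') = exp(−α‖y−y'‖²) is concave as a function of y on any set 𝒳 ⊆ ℝⁿ bounded in norm by C (i.e. ‖y‖ ≤ C for all y ∈ 𝒳) whenever α ≤ 1/(8C²) — more generally whenever 8αC² ≤ ε for some ε ≤ 1. -/
/-!
The profile `φ(r) = exp (-α r²)` has `φ''(r) = 2α (2α r² - 1) φ(r)`, so it is concave on
`[-R, R]` as soon as `2α R² ≤ 1`, and it is antitone on `[0, ∞)`. An antitone concave function
of the convex function `y ↦ ‖y - y'‖` is concave. On a set bounded in norm by `C` the distances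
are at most `R = 2C`, and `2α (2C)² = 8αC² ≤ 1`.
-/

open Real Set

lemma hasDerivAt_exp_neg_mul_sq (α r : ℝ) :
    HasDerivAt (fun r => exp (-α * r ^ 2)) (-2 * α * r * exp (-α * r ^ 2)) r := by
  convert ((hasDerivAt_pow 2 r).const_mul (-α)).exp using 1
  ring

lemma hasDerivAt_deriv_exp_neg_mul_sq (α r : ℝ) :
    HasDerivAt (fun r => -2 * α * r * exp (-α * r ^ 2))
      (2 * α * (2 * α * r ^ 2 - 1) * exp (-α * r ^ 2)) r :=
  (((hasDerivAt_id' r).const_mul (-2 * α)).mul (hasDerivAt_exp_neg_mul_sq α r)).congr_deriv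
    (by ring)

lemma concaveOn_exp_neg_mul_sq {α R : ℝ} (hα : 0 ≤ α) (hR : 2 * α * R ^ 2 ≤ 1) :
    ConcaveOn ℝ (Icc (-R) R) (fun r => exp (-α * r ^ 2)) := by
  refine concaveOn_of_hasDerivWithinAt2_nonpos (convex_Icc _ _) (by fun_prop)
    (fun r _ => (hasDerivAt_exp_neg_mul_sq α r).hasDerivWithinAt)
    (fun r _ => (hasDerivAt_deriv_exp_neg_mul_sq α r).hasDerivWithinAt) fun r hr => ?_
  rw [interior_Icc] at hr
  have hr2 : r ^ 2 ≤ R ^ 2 := sq_le_sq' hr.1.le hr.2.le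
  have : 2 * α * r ^ 2 - 1 ≤ 0 := by nlinarith
  exact mul_nonpos_of_nonpos_of_nonneg (mul_nonpos_of_nonneg_of_nonpos (by positivity) this)
    (exp_pos _).le

lemma antitoneOn_exp_neg_mul_sq {α : ℝ} (hα : 0 ≤ α) :
    AntitoneOn (fun r => exp (-α * r ^ 2)) (Ici 0) := fun _ hr _ _ hrs =>
  exp_le_exp.2 <| mul_le_mul_of_nonpos_left (pow_le_pow_left₀ hr hrs 2) (neg_nonpos.2 hα)

lemma concaveOn_exp_neg_mul_norm_sub_sq {E : Type*} [NormedAddCommGroup E] [NormedSpace ℝ E]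
    {s : Set E} (hs : Convex ℝ s) {α R : ℝ} (hα : 0 ≤ α) (hR : 2 * α * R ^ 2 ≤ 1) (y' : E)
    (hbdd : ∀ y ∈ s, ‖y - y'‖ ≤ R) :
    ConcaveOn ℝ s (fun y => exp (-α * ‖y - y'‖ ^ 2)) := by
  set d : E → ℝ := fun y => dist y y'
  have hd : d '' s ⊆ Icc (-R) R ∩ Ici 0 := by
    rintro _ ⟨y, hy, rfl⟩
    have hy' : d y ≤ R := (dist_eq_norm y y').trans_le (hbdd y hy)
    exact ⟨⟨by linarith [dist_nonneg (x := y) (y := y')], hy'⟩, dist_nonneg⟩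
  have hd_convex : Convex ℝ (d '' s) := Real.convex_iff_isPreconnected.2 <|
    hs.isPreconnected.image d (continuous_id.dist continuous_const).continuousOn
  have hconc := ((concaveOn_exp_neg_mul_sq hα hR).subset (hd.trans inter_subset_left)
    hd_convex).comp_convexOn (convexOn_dist y' hs)
    ((antitoneOn_exp_neg_mul_sq hα).mono (hd.trans inter_subset_right))
  simpa only [Function.comp_def, d, dist_eq_norm] using hconc

theorem gaussian_kernel_concave_on_bounded_general {n : ℕ}
    (𝒳 : Set (EuclideanSpace ℝ (Fin n))) (h𝒳 : Convex ℝ 𝒳)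
    (C : ℝ) (hbdd : ∀ y ∈ 𝒳, ‖y‖ ≤ C)
    (α : ℝ) (hα : 0 < α) (hαC : α ≤ 1 / (8 * C ^ 2)) :
    ∀ y' ∈ 𝒳, ConcaveOn ℝ 𝒳 (fun y => Real.exp (-α * ‖y - y'‖ ^ 2)) := by
  intro y' hy'
  have hR : 2 * α * (2 * C) ^ 2 ≤ 1 := by
    have := mul_le_of_le_div₀ zero_le_one (by positivity) hαC
    linarith
  exact concaveOn_exp_neg_mul_norm_sub_sq h𝒳 hα.le hR y'
    fun y hy => norm_sub_le_of_le (hbdd y hy) (hbdd y' hy') |>.trans_eq (two_mul C).symm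

/-- the Gaussian kernel `y ↦ exp(−α‖y−y'‖²)` is concave on any convex
set `𝒳` bounded in norm by `C` whenever `α ≤ 1/(8C²)`. -/
theorem gaussian_kernel_concave_on_bounded {n : ℕ}
    (𝒳 : Set (EuclideanSpace ℝ (Fin n))) (h𝒳 : Convex ℝ 𝒳)
    (C : ℝ) (hC : 0 < C) (hbdd : ∀ y ∈ 𝒳, ‖y‖ ≤ C)
    (α : ℝ) (hα : 0 < α) (hαC : α ≤ 1 / (8 * C ^ 2)) :
    ∀ y' ∈ 𝒳, ConcaveOn ℝ 𝒳 (fun y => Real.exp (-α * ‖y - y'‖ ^ 2)) :=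
  gaussian_kernel_concave_on_bounded_general 𝒳 h𝒳 C hbdd α hα hαC
end

section
/- Let μ be a finite signed Borel measure on ℝⁿ of the form μ(A) = ∫_A h(y) dy with h integrable, and let Λ be a finite positive Borel measure on ℝⁿ with full support. Define k(r,r') := ∫ exp(−i (r−r')ᵀ w) dΛ(w). Then ∫∫ k(y,z) dμ(y) dμ(z) = ∫ |ĥ(w)|² dΛ(w), where ĥ is the Fourier transform of h; consequently ∫∫ k dμ⊗dμ = 0 implies μ = 0. -/
/-!
Writing `k(y, z) h(y) h(z) = ∫ e^{-i⟪y, w⟫} h(y) · conj (e^{-i⟪z, w⟫} h(z)) dΛ(w)` and applying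
Fubini twice (everything is dominated by `|h(y)| |h(z)|` since `Λ` is finite) turns the double
integral into `∫ ĥ · conj ĥ dΛ`. If it vanishes, the continuous function `|ĥ|²` vanishes
`Λ`-a.e., hence everywhere because `Λ` charges every nonempty open set. Since `ĥ` is `𝓕 h`
up to rescaling the frequency by `2π`, `h = 0` a.e. by injectivity of `𝓕` on `L¹`.
-/

open MeasureTheory Complex FourierTransform Function Real
open scoped RealInnerProductSpace ComplexConjugate

section FourierInjective

variable {V E : Type*} [NormedAddCommGroup V] [InnerProductSpace ℝ V] [FiniteDimensional ℝ V]
  [MeasurableSpace V] [BorelSpace V] [NormedAddCommGroup E] [NormedSpace ℂ E] [CompleteSpace E]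

theorem Real.integral_fourier_smul_eq_integral_smul_fourier {ψ : V → ℂ} {f : V → E}
    (hψ : Integrable ψ) (hf : Integrable f) :
    ∫ ξ, 𝓕 ψ ξ • f ξ = ∫ x, ψ x • 𝓕 f x := by
  have := VectorFourier.integral_fourierIntegral_smul_eq_flip (L := innerₗ V)
    Real.continuous_fourierChar continuous_inner hψ hf
  rwa [flip_innerₗ] at this

/-- Every test function is `𝓕 ψ` for a Schwartz function `ψ`, and `∫ 𝓕 ψ • f = ∫ ψ • 𝓕 f = 0`. -/
theorem MeasureTheory.Integrable.ae_eq_zero_of_fourier_eq_zero {f : V → E} (hf : Integrable f)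
    (h0 : 𝓕 f = 0) : f =ᵐ[volume] 0 := by
  refine ae_eq_zero_of_integral_contDiff_smul_eq_zero hf.locallyIntegrable fun g hg hg_supp => ?_
  let G : SchwartzMap V ℂ :=
    (hg_supp.comp_left ofReal_zero).toSchwartzMap (ofRealCLM.contDiff.comp hg)
  let ψ : SchwartzMap V ℂ := 𝓕⁻ G
  have hψ : 𝓕 (ψ : V → ℂ) = fun x => (g x : ℂ) := by
    rw [← SchwartzMap.fourier_coe, FourierTransform.fourier_fourierInv_eq G]
    rfl
  calc ∫ x, g x • f x = ∫ x, 𝓕 (ψ : V → ℂ) x • f x := by rw [hψ]; simp only [coe_smul]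
    _ = ∫ x, ψ x • 𝓕 f x := Real.integral_fourier_smul_eq_integral_smul_fourier ψ.integrable hf
    _ = 0 := by simp [h0]

end FourierInjective

section Fubini

variable {α β : Type*} [MeasurableSpace α] [MeasurableSpace β] {μ : Measure α} {ν : Measure β}
  [SFinite μ] [SFinite ν]

theorem integral_integral_mul_swap {𝕜 : Type*} [RCLike 𝕜] {g : α → β → 𝕜}
    (hg : Integrable (uncurry g) (μ.prod ν)) {φ : β → 𝕜} (hφ : AEStronglyMeasurable φ ν) {C : ℝ}
    (hφC : ∀ b, ‖φ b‖ ≤ C) :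
    ∫ a, ∫ b, φ b * g a b ∂ν ∂μ = ∫ b, φ b * ∫ a, g a b ∂μ ∂ν := by
  have hint : Integrable (uncurry fun a b => φ b * g a b) (μ.prod ν) :=
    hg.bdd_mul hφ.comp_snd (ae_of_all _ fun p => hφC p.2)
  simp_rw [integral_integral_swap hint, integral_const_mul]

theorem integral_integral_integral_mul_conj_eq_integral_norm_sq [IsFiniteMeasure ν]
    {g : α → β → ℂ} {F : α → ℝ} (hg : AEStronglyMeasurable (uncurry g) (μ.prod ν))
    (hF : Integrable F μ) (hgF : ∀ a b, ‖g a b‖ ≤ F a) :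
    ∫ a, ∫ a', ∫ b, g a b * conj (g a' b) ∂ν ∂μ ∂μ = ∫ b, (‖∫ a, g a b ∂μ‖ : ℂ) ^ 2 ∂ν := by
  have hg_int : Integrable (uncurry g) (μ.prod ν) :=
    (hF.mul_prod (integrable_const (1 : ℝ))).mono' hg
      (ae_of_all _ fun p => by simpa [uncurry] using hgF p.1 p.2)
  have hG_bound (b : β) : ‖conj (∫ a, g a b ∂μ)‖ ≤ ∫ a, F a ∂μ := by
    rw [RCLike.norm_conj]
    exact norm_integral_le_of_norm_le hF (ae_of_all _ fun a => hgF a b)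
  have hG_meas : AEStronglyMeasurable (fun b => conj (∫ a, g a b ∂μ)) ν :=
    continuous_conj.comp_aestronglyMeasurable hg.prod_swap.integral_prod_right'
  have inner_swap : ∀ᵐ a ∂μ, ∫ a', ∫ b, g a b * conj (g a' b) ∂ν ∂μ
      = ∫ b, conj (∫ a, g a b ∂μ) * g a b ∂ν := by
    filter_upwards [hg.prodMk_left] with a hga
    have hg_conj : Integrable (uncurry fun a' b => conj (g a' b)) (μ.prod ν) :=
      conjCLE.toContinuousLinearMap.integrable_comp hg_int
    rw [integral_integral_mul_swap (φ := g a) hg_conj hga (hgF a)]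
    congr 1 with b
    rw [integral_conj, mul_comm]
  calc ∫ a, ∫ a', ∫ b, g a b * conj (g a' b) ∂ν ∂μ ∂μ
      = ∫ a, ∫ b, conj (∫ a, g a b ∂μ) * g a b ∂ν ∂μ := integral_congr_ae inner_swap
    _ = ∫ b, conj (∫ a, g a b ∂μ) * ∫ a, g a b ∂μ ∂ν :=
      integral_integral_mul_swap hg_int hG_meas hG_bound
    _ = ∫ b, (‖∫ a, g a b ∂μ‖ : ℂ) ^ 2 ∂ν := by simp_rw [conj_mul']

end Fubini

theorem Continuous.eq_zero_of_integral_norm_sq_eq_zero {X E : Type*} [TopologicalSpace X]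
    [MeasurableSpace X] [OpensMeasurableSpace X] {Λ : Measure X} [IsFiniteMeasure Λ]
    [Λ.IsOpenPosMeasure] [NormedAddCommGroup E] {G : X → E} (hG : Continuous G) {C : ℝ}
    (hGC : ∀ x, ‖G x‖ ≤ C) (h0 : ∫ x, ‖G x‖ ^ 2 ∂Λ = 0) : G = 0 := by
  have hint : Integrable (fun x => ‖G x‖ ^ 2) Λ := by
    refine .of_bound (hG.norm.pow 2).aestronglyMeasurable (C ^ 2) (ae_of_all _ fun x => ?_)
    rw [norm_pow, norm_norm]
    gcongr
    exact hGC x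
  funext x
  by_contra hx
  exact (integral_pos_of_integrable_nonneg_nonzero (hG.norm.pow 2) hint
    (fun x => sq_nonneg ‖G x‖) (x := x) (by simpa using hx)).ne' h0

section AngularFourier

variable {V : Type*} [NormedAddCommGroup V] [InnerProductSpace ℝ V]

theorem norm_cexp_neg_I_mul_ofReal (x : ℝ) : ‖cexp (-I * x)‖ = 1 := by
  simp [Complex.norm_exp]

theorem cexp_neg_I_inner_sub_left (y z w : V) :
    cexp (-I * ⟪y - z, w⟫) = cexp (-I * ⟪y, w⟫) * conj (cexp (-I * ⟪z, w⟫)) := by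
  rw [← Complex.exp_conj, ← Complex.exp_add, inner_sub_left]
  congr 1
  simp only [map_mul, map_neg, conj_I, conj_ofReal, ofReal_sub]
  ring

theorem norm_cexp_neg_I_inner_mul (f : V → ℂ) (y w : V) :
    ‖cexp (-I * ⟪y, w⟫) * f y‖ = ‖f y‖ := by
  rw [norm_mul, norm_cexp_neg_I_mul_ofReal, one_mul]

variable [MeasurableSpace V]

/-- The Fourier transform in the convention `e^{-i⟪y, w⟫}`, whereas `𝓕` uses
`e^{-2πi⟪y, w⟫}`. -/
noncomputable def angularFourier (μ : Measure V) (f : V → ℂ) (w : V) : ℂ :=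
  ∫ y, cexp (-I * ⟪y, w⟫) * f y ∂μ

noncomputable def bochnerKernel (Λ : Measure V) (r r' : V) : ℂ :=
  ∫ w, cexp (-I * ⟪r - r', w⟫) ∂Λ

theorem norm_angularFourier_le (μ : Measure V) (f : V → ℂ) (w : V) :
    ‖angularFourier μ f w‖ ≤ ∫ y, ‖f y‖ ∂μ :=
  (norm_integral_le_integral_norm _).trans_eq
    (integral_congr_ae (ae_of_all _ fun y => norm_cexp_neg_I_inner_mul f y w))

section OpensMeasurable

variable [OpensMeasurableSpace V]

theorem continuous_angularFourier {μ : Measure V} {f : V → ℂ} (hf : Integrable f μ) :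
    Continuous (angularFourier μ f) :=
  continuous_of_dominated
    (fun w => ((by fun_prop : Continuous fun y => cexp (-I * ⟪y, w⟫)).aestronglyMeasurable).mul
      hf.aestronglyMeasurable)
    (fun w => ae_of_all _ fun y => (norm_cexp_neg_I_inner_mul f y w).le) hf.norm
    (ae_of_all _ fun y => by fun_prop)

theorem integral_integral_bochnerKernel_mul_conj [SecondCountableTopology V] {μ : Measure V}
    [SFinite μ] (Λ : Measure V) [IsFiniteMeasure Λ] {f : V → ℂ} (hf : Integrable f μ) :
    ∫ y, ∫ z, bochnerKernel Λ y z * f y * conj (f z) ∂μ ∂μ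
      = ∫ w, (‖angularFourier μ f w‖ : ℂ) ^ 2 ∂Λ := by
  let g (y w : V) : ℂ := cexp (-I * ⟪y, w⟫) * f y
  have hg_meas : AEStronglyMeasurable (uncurry g) (μ.prod Λ) :=
    (by fun_prop : Continuous fun p : V × V => cexp (-I * ⟪p.1, p.2⟫)).aestronglyMeasurable.mul
      hf.aestronglyMeasurable.comp_fst
  have hkernel (y z : V) :
      bochnerKernel Λ y z * f y * conj (f z) = ∫ w, g y w * conj (g z w) ∂Λ := by
    simp only [bochnerKernel, g, ← integral_mul_const, map_mul, cexp_neg_I_inner_sub_left]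
    congr 1 with w
    ring
  simp_rw [hkernel]
  exact integral_integral_integral_mul_conj_eq_integral_norm_sq hg_meas hf.norm
    fun y w => (norm_cexp_neg_I_inner_mul f y w).le

end OpensMeasurable

variable [FiniteDimensional ℝ V] [BorelSpace V]

theorem angularFourier_volume_eq_fourier (f : V → ℂ) (w : V) :
    angularFourier volume f w = 𝓕 f ((2 * π)⁻¹ • w) := by
  rw [angularFourier, Real.fourier_eq']
  congr 1 with y
  rw [real_inner_smul_right, smul_eq_mul]
  congr 2
  push_cast
  field_simp

theorem MeasureTheory.Integrable.ae_eq_zero_of_angularFourier_eq_zero {f : V → ℂ}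
    (hf : Integrable f) (h0 : angularFourier volume f = 0) : f =ᵐ[volume] 0 := by
  refine hf.ae_eq_zero_of_fourier_eq_zero (funext fun ξ => ?_)
  have := congrFun h0 ((2 * π) • ξ)
  rwa [angularFourier_volume_eq_fourier, smul_smul, inv_mul_cancel₀ (by positivity),
    one_smul] at this

end AngularFourier

theorem bochner_kernel_double_integral_general
    {n : ℕ} (h : EuclideanSpace ℝ (Fin n) → ℝ)
    (hint : Integrable h volume)
    (Λ : Measure (EuclideanSpace ℝ (Fin n))) [IsFiniteMeasure Λ]
    (hsupp : ∀ U : Set (EuclideanSpace ℝ (Fin n)), IsOpen U → U.Nonempty → 0 < Λ U) :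
    let k : EuclideanSpace ℝ (Fin n) → EuclideanSpace ℝ (Fin n) → ℂ := fun r r' =>
      ∫ w, Complex.exp (-Complex.I * ((inner ℝ (r - r') w : ℝ) : ℂ)) ∂Λ
    let hhat : EuclideanSpace ℝ (Fin n) → ℂ := fun w =>
      ∫ y, Complex.exp (-Complex.I * ((inner ℝ y w : ℝ) : ℂ)) * (h y : ℂ) ∂volume
    (∫ y, ∫ z, k y z * (h y : ℂ) * (h z : ℂ) ∂volume ∂volume
        = ∫ w, ((‖hhat w‖ : ℝ) : ℂ) ^ 2 ∂Λ) ∧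
    ((∫ y, ∫ z, k y z * (h y : ℂ) * (h z : ℂ) ∂volume ∂volume = 0) →
      h =ᵐ[volume] 0) := by
  intro k hhat
  have hh_int : Integrable (fun y => (h y : ℂ)) := hint.ofReal
  have identity : ∫ y, ∫ z, k y z * h y * h z = ∫ w, (‖hhat w‖ : ℂ) ^ 2 ∂Λ := by
    have := integral_integral_bochnerKernel_mul_conj Λ hh_int
    simp only [conj_ofReal] at this
    exact this
  refine ⟨identity, fun hzero => ?_⟩
  have : Λ.IsOpenPosMeasure := ⟨fun U hU hne => (hsupp U hU hne).ne'⟩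
  have hhat_zero : angularFourier volume (fun y => (h y : ℂ)) = 0 :=
    (continuous_angularFourier hh_int).eq_zero_of_integral_norm_sq_eq_zero
      (norm_angularFourier_le _ _) (by exact_mod_cast identity.symm.trans hzero)
  exact (hh_int.ae_eq_zero_of_angularFourier_eq_zero hhat_zero).mono fun y hy =>
    ofReal_eq_zero.mp hy

/-- Bochner kernels detect measures: for the radial kernel
`k(r,r') = ∫ exp(−i (r−r')ᵀw) dΛ(w)` with `Λ` a finite positive Borel measure of full
support and a signed measure with density `h ∈ L¹`, one has
`∫∫ k(y,z) h(y) h(z) dy dz = ∫ |ĥ(w)|² dΛ(w)`, and this double integral vanishing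
forces `h = 0` a.e. -/
theorem bochner_kernel_double_integral
    {n : ℕ} (h : EuclideanSpace ℝ (Fin n) → ℝ)
    (hmeas : Measurable h) (hint : Integrable h volume)
    (Λ : Measure (EuclideanSpace ℝ (Fin n))) [IsFiniteMeasure Λ]
    (hsupp : ∀ U : Set (EuclideanSpace ℝ (Fin n)), IsOpen U → U.Nonempty → 0 < Λ U) :
    let k : EuclideanSpace ℝ (Fin n) → EuclideanSpace ℝ (Fin n) → ℂ := fun r r' =>
      ∫ w, Complex.exp (-Complex.I * ((inner ℝ (r - r') w : ℝ) : ℂ)) ∂Λ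
    let hhat : EuclideanSpace ℝ (Fin n) → ℂ := fun w =>
      ∫ y, Complex.exp (-Complex.I * ((inner ℝ y w : ℝ) : ℂ)) * (h y : ℂ) ∂volume
    (∫ y, ∫ z, k y z * (h y : ℂ) * (h z : ℂ) ∂volume ∂volume
        = ∫ w, ((‖hhat w‖ : ℝ) : ℂ) ^ 2 ∂Λ) ∧
    ((∫ y, ∫ z, k y z * (h y : ℂ) * (h z : ℂ) ∂volume ∂volume = 0) →
      h =ᵐ[volume] 0) :=
  bochner_kernel_double_integral_general h hint Λ hsupp
end
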